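/- Let X be path connected, locally path connected, semilocally simply connected, locally compact and Hausdorff. The action of the topologised fundamental groupoid Π₁(X) on X itself (where [γ] sends γ(0) to γ(1)) is proper if and only if the fundamental group π₁(X) is finite. -/

import Mathlib

noncomputable section

attribute [local instance] Path.Homotopic.setoid

/-- The setoid of endpoint-fixing homotopy on the path space `C([0,1], X)`. -/
def homotopicRelSetoid (X : Type*) [TopologicalSpace X] : Setoid C(unitInterval, X) :=
  ⟨fun γ δ => ContinuousMap.HomotopicRel γ δ {0, 1},
    ContinuousMap.HomotopicRel.equivalence⟩

/-- The topologised fundamental groupoid `Π₁(X)`: the quotient of the path space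
(with the compact-open topology) by endpoint-fixing homotopy, carrying the quotient
topology. -/
def PiOne (X : Type*) [TopologicalSpace X] : Type _ :=
  Quotient (homotopicRelSetoid X)

instance (X : Type*) [TopologicalSpace X] : TopologicalSpace (PiOne X) :=
  instTopologicalSpaceQuotient

/-- The kinetics map of the action of `Π₁(X)` on its unit space `X`:
`[γ] ↦ (γ 1, γ 0)`. -/
def PiOne.kin {X : Type*} [TopologicalSpace X] : PiOne X → X × X :=
  Quotient.lift (fun γ => (γ 1, γ 0)) fun γ δ h => by
    have h0 : γ 0 = δ 0 := h.some.fst_eq_snd (by simp)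
    have h1 : γ 1 = δ 1 := h.some.fst_eq_snd (by simp)
    simp [h0, h1]

/-!
Over a product `U × V` of open, path connected, relatively simply connected sets, `Π₁(X)` is a
union of sheets `{[α⁻¹ ζ β] | α ⊆ V, β ⊆ U}`, one for each class `ζ` of paths between two fixed
base points, and `kin` maps each sheet homeomorphically onto `U × V`. Sheets are open: a map close
to `f` in the compact-open topology follows, on each piece of a fine subdivision, the same
relatively simply connected set as `f`, so it is homotopic to `f` with two short tails attached.
The inverse of `kin` on a sheet is continuous because attaching short tails is.
Hence the fibres of `kin` are discrete; a compact fibre is finite, which gives finiteness of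
`π₁(X)`. Conversely, if `π₁(X)` is finite, the preimage of a compact subset of `U × V` is a finite
union of homeomorphic copies of it, and a compact set is covered by finitely many such boxes.
-/

open unitInterval Set Filter Topology CategoryTheory

namespace Path

variable {X : Type*} [TopologicalSpace X] {x y z : X}

def toHom (p : Path x y) : FundamentalGroupoid.mk x ⟶ FundamentalGroupoid.mk y :=
  Homotopic.Quotient.mk p

lemma toHom_surjective : Function.Surjective (toHom : Path x y → _) :=
  Homotopic.Quotient.mk_surjective

lemma toHom_eq_toHom_iff {p q : Path x y} : p.toHom = q.toHom ↔ p.Homotopic q :=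
  Homotopic.Quotient.eq

@[simp]
lemma toHom_trans (p : Path x y) (q : Path y z) : (p.trans q).toHom = p.toHom ≫ q.toHom := rfl

@[simp]
lemma toHom_refl (x : X) : (Path.refl x).toHom = 𝟙 _ := rfl

@[simp]
lemma toHom_symm (p : Path x y) : p.symm.toHom = CategoryTheory.inv p.toHom := by
  rw [← Groupoid.inv_eq_inv]
  rfl

lemma toHom_subpath_comp (γ : Path x y) (t₀ t₁ t₂ : I) :
    (γ.subpath t₀ t₁).toHom ≫ (γ.subpath t₁ t₂).toHom = (γ.subpath t₀ t₂).toHom :=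
  toHom_eq_toHom_iff.2 ⟨Homotopy.subpathTransSubpath γ t₀ t₁ t₂⟩

theorem toHom_subpath_comm_of_forall_lt {x' y' : X} {γ : Path x y} {δ : Path x' y'} {t : ℕ → I}
    (α : ∀ k, Path (γ (t k)) (δ (t k))) {n : ℕ}
    (h : ∀ k < n, (γ.subpath (t k) (t (k + 1))).toHom ≫ (α (k + 1)).toHom =
      (α k).toHom ≫ (δ.subpath (t k) (t (k + 1))).toHom) :
    (γ.subpath (t 0) (t n)).toHom ≫ (α n).toHom =
      (α 0).toHom ≫ (δ.subpath (t 0) (t n)).toHom := by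
  induction n with
  | zero => simp [subpath_self]
  | succ n ih =>
    rw [← toHom_subpath_comp γ _ (t n), ← toHom_subpath_comp δ _ (t n), Category.assoc,
      h n n.lt_succ_self, ← Category.assoc, ih fun k hk => h k (hk.trans n.lt_succ_self),
      Category.assoc]

end Path

def ContinuousMap.toPath {X : Type*} [TopologicalSpace X] (f : C(I, X)) : Path (f 0) (f 1) :=
  ⟨f, rfl, rfl⟩

lemma ContinuousMap.toHom_subpath_zero_one {X : Type*} [TopologicalSpace X] (f : C(I, X)) :
    (f.toPath.subpath 0 1).toHom = f.toPath.toHom := by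
  rw [Path.subpath_zero_one]
  rfl

section RelativelySimplyConnected

variable {X : Type*} [TopologicalSpace X]

def IsRelativelySimplyConnected (U : Set X) : Prop :=
  ∀ (z : X) (γ : Path z z), Set.range γ ⊆ U → γ.Homotopic (Path.refl z)

lemma IsRelativelySimplyConnected.mono {U V : Set X} (hU : IsRelativelySimplyConnected U)
    (hVU : V ⊆ U) : IsRelativelySimplyConnected V :=
  fun z γ hγ => hU z γ (hγ.trans hVU)

lemma IsRelativelySimplyConnected.toHom_eq {U : Set X} (hU : IsRelativelySimplyConnected U)
    {x y : X} {p q : Path x y} (hp : range p ⊆ U) (hq : range q ⊆ U) : p.toHom = q.toHom := by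
  have h := Path.toHom_eq_toHom_iff.2
    (hU x (p.trans q.symm) (by simpa [Path.trans_range] using ⟨hp, hq⟩))
  simpa [IsIso.comp_inv_eq] using h

lemma exists_isOpen_isPathConnected_isRelativelySimplyConnected [LocallyPathConnectedSpace X]
    (hslsc : ∀ x : X, ∃ U ∈ 𝓝 x, IsRelativelySimplyConnected U) (x : X) :
    ∃ U, IsOpen U ∧ x ∈ U ∧ IsPathConnected U ∧ IsRelativelySimplyConnected U := by
  obtain ⟨U, hU, hUr⟩ := hslsc x
  have hx : x ∈ interior U := mem_interior_iff_mem_nhds.2 hU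
  exact ⟨pathComponentIn (interior U) x, isOpen_interior.pathComponentIn x,
    mem_pathComponentIn_self hx, isPathConnected_pathComponentIn hx,
    hUr.mono (pathComponentIn_subset.trans interior_subset)⟩

end RelativelySimplyConnected

lemma ContinuousMap.exists_mem_nhds_setOf_range_subset {X Y : Type*} [TopologicalSpace X]
    [TopologicalSpace Y] {y : Y} {N : Set C(X, Y)} (hN : N ∈ 𝓝 (ContinuousMap.const X y)) :
    ∃ Ω ∈ 𝓝 y, {g : C(X, Y) | range g ⊆ Ω} ⊆ N := by
  suffices (𝓝 y).lift' (fun Ω => {g : C(X, Y) | range g ⊆ Ω}) ≤ 𝓝 (ContinuousMap.const X y) from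
    (mem_lift'_sets fun _ _ h _ hg => hg.trans h).1 (this hN)
  rw [ContinuousMap.nhds_compactOpen]
  refine le_iInf₂ fun K _ => le_iInf₂ fun W hW => le_iInf fun hKW => le_principal_iff.2 ?_
  rcases K.eq_empty_or_nonempty with rfl | ⟨s, hs⟩
  · simp only [mapsTo_empty, ofPred_true, univ_mem]
  · exact mem_of_superset (mem_lift' (hW.mem_nhds (hKW hs))) fun g hg s _ => hg (mem_range_self s)

namespace PiOne

variable {X : Type*} [TopologicalSpace X] {x y : X}

def mk (f : C(I, X)) : PiOne X := Quotient.mk (homotopicRelSetoid X) f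

lemma continuous_mk : Continuous (mk : C(I, X) → PiOne X) := continuous_quot_mk

lemma isOpen_iff_isOpen_preimage_mk {S : Set (PiOne X)} : IsOpen S ↔ IsOpen (mk ⁻¹' S) := Iff.rfl

lemma kin_mk (f : C(I, X)) : kin (mk f) = (f 1, f 0) := rfl

lemma continuous_kin : Continuous (kin : PiOne X → X × X) :=
  Continuous.quotient_lift (by fun_prop) _

def ofHom : Path.Homotopic.Quotient x y → PiOne X :=
  Quotient.lift (fun p : Path x y => mk p.toContinuousMap) fun _ _ h => Quotient.sound h

@[simp]
lemma ofHom_toHom (p : Path x y) : ofHom p.toHom = mk p.toContinuousMap := rfl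

lemma mk_eq_ofHom (f : C(I, X)) : mk f = ofHom f.toPath.toHom := rfl

lemma ofHom_injective : Function.Injective (ofHom : Path.Homotopic.Quotient x y → PiOne X) := by
  rintro ⟨p⟩ ⟨q⟩ h
  exact Quotient.sound (Quotient.exact h :)

@[simp]
lemma kin_ofHom (ζ : Path.Homotopic.Quotient x y) : kin (ofHom ζ) = (y, x) := by
  induction ζ using Path.Homotopic.Quotient.ind with
  | mk p => exact Prod.ext p.target p.source

lemma range_ofHom : range (ofHom : Path.Homotopic.Quotient x y → PiOne X) = kin ⁻¹' {(y, x)} := by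
  refine subset_antisymm (range_subset_iff.2 fun ζ => kin_ofHom ζ) fun c hc => ?_
  obtain ⟨f, rfl⟩ := Quotient.exists_rep c
  obtain ⟨h1, h0⟩ := Prod.ext_iff.1 hc
  dsimp only at h1 h0
  subst h0 h1
  exact ⟨_, (mk_eq_ofHom f).symm⟩

theorem exists_mem_nhds_ofHom_mem (γ : Path x y) {O : Set (PiOne X)} (hO : IsOpen O)
    (hγ : ofHom γ.toHom ∈ O) :
    ∃ Ω₀ ∈ 𝓝 x, ∃ Ω₁ ∈ 𝓝 y, ∀ ⦃b a : X⦄ (c₀ : Path x b) (c₁ : Path y a),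
      range c₀ ⊆ Ω₀ → range c₁ ⊆ Ω₁ → ofHom (inv c₀.toHom ≫ γ.toHom ≫ c₁.toHom) ∈ O := by
  -- `(c₀, c₁) ↦ [c₀⁻¹ γ c₁]` is continuous on pairs of maps starting at `x` and `y`, and it sends
  -- the constant pair into `O`.
  let S : Set (C(I, X) × C(I, X)) := {p | p.1 0 = x ∧ p.2 0 = y}
  let ρ (p : S) : Path (p.1.1 1) (p.1.2 1) :=
    (Path.mk p.1.1 p.2.1 rfl).symm.trans (γ.trans (Path.mk p.1.2 p.2.2 rfl))
  have h₀ : Continuous ↿fun p : S => Path.mk p.1.1 p.2.1 rfl := by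
    change Continuous fun q : S × I => q.1.1.1 q.2
    fun_prop
  have h₁ : Continuous ↿fun p : S => Path.mk p.1.2 p.2.2 rfl := by
    change Continuous fun q : S × I => q.1.1.2 q.2
    fun_prop
  have hρ : Continuous fun p => mk (ρ p).toContinuousMap :=
    continuous_mk.comp <| ContinuousMap.continuous_of_continuous_uncurry _ <|
      Path.trans_continuous_family _ (Path.symm_continuous_family _ h₀) _
        (Path.trans_continuous_family (fun _ => γ) (γ.continuous.comp continuous_snd) _ h₁)
  have hρ₀ : mk (ρ ⟨(.const I x, .const I y), rfl, rfl⟩).toContinuousMap ∈ O := by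
    change ofHom ((Path.refl x).symm.trans (γ.trans (Path.refl y))).toHom ∈ O
    simpa using hγ
  obtain ⟨N, hN, hNO⟩ := (mem_nhds_subtype _ _ _).1 ((hO.preimage hρ).mem_nhds hρ₀)
  obtain ⟨N₀, hN₀, N₁, hN₁, hN₀₁⟩ := mem_nhds_prod_iff.1 hN
  obtain ⟨Ω₀, hΩ₀, hΩ₀N⟩ := ContinuousMap.exists_mem_nhds_setOf_range_subset hN₀
  obtain ⟨Ω₁, hΩ₁, hΩ₁N⟩ := ContinuousMap.exists_mem_nhds_setOf_range_subset hN₁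
  refine ⟨Ω₀, hΩ₀, Ω₁, hΩ₁, ?_⟩
  rintro _ _ ⟨c₀, hc₀, rfl⟩ ⟨c₁, hc₁, rfl⟩ hr₀ hr₁
  rw [← Path.toHom_symm, ← Path.toHom_trans, ← Path.toHom_trans, ofHom_toHom]
  have hc : ((c₀, c₁) : C(I, X) × C(I, X)) ∈ N := hN₀₁ ⟨hΩ₀N hr₀, hΩ₁N hr₁⟩
  exact hNO (a := ⟨(c₀, c₁), hc₀, hc₁⟩) hc

end PiOne

namespace ContinuousMap

variable {X : Type*} [TopologicalSpace X]

theorem exists_toHom_comm_of_subdivision {f g : C(I, X)} {t : ℕ → I} {n : ℕ} (ht0 : t 0 = 0)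
    (htm : Monotone t) (htn : ∀ m ≥ n, t m = 1) {W P : ℕ → Set X}
    (hW : ∀ k < n, IsRelativelySimplyConnected (W k))
    (hfW : ∀ k < n, MapsTo f (Icc (t k) (t (k + 1))) (W k))
    (hgW : ∀ k < n, MapsTo g (Icc (t k) (t (k + 1))) (W k))
    (hP : ∀ k ≤ n, IsPathConnected (P k)) (hfP : ∀ k ≤ n, f (t k) ∈ P k)
    (hgP : ∀ k ≤ n, g (t k) ∈ P k) (hPW : ∀ k < n, P k ⊆ W k ∧ P (k + 1) ⊆ W k) :
    ∃ (α : Path (f 0) (g 0)) (β : Path (f 1) (g 1)), range α ⊆ P 0 ∧ range β ⊆ P n ∧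
      f.toPath.toHom ≫ β.toHom = α.toHom ≫ g.toPath.toHom := by
  have hJ : ∀ k ≤ n, JoinedIn (P k) (f (t k)) (g (t k)) := fun k hk =>
    (hP k hk).joinedIn _ (hfP k hk) _ (hgP k hk)
  have hα : ∀ k, ∃ α : Path (f.toPath (t k)) (g.toPath (t k)), k ≤ n → range α ⊆ P k := by
    intro k
    rcases le_or_gt k n with hk | hk
    · exact ⟨(hJ k hk).somePath, fun _ => range_subset_iff.2 (hJ k hk).somePath_mem⟩
    · have hJn := (hJ n le_rfl).joined
      rw [htn n le_rfl] at hJn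
      rw [htn k hk.le]
      exact ⟨hJn.somePath, fun h => absurd h (not_le.2 hk)⟩
  choose α hαP using hα
  have hsq : ∀ k < n, (f.toPath.subpath (t k) (t (k + 1))).toHom ≫ (α (k + 1)).toHom =
      (α k).toHom ≫ (g.toPath.subpath (t k) (t (k + 1))).toHom := by
    intro k hk
    simp only [← Path.toHom_trans]
    apply (hW k hk).toHom_eq <;>
      simp only [Path.trans_range, Path.range_subpath_of_le _ _ _ (htm k.le_succ),
        union_subset_iff, image_subset_iff]
    exacts [⟨hfW k hk, (hαP (k + 1) hk).trans (hPW k hk).2⟩,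
      ⟨(hαP k hk.le).trans (hPW k hk).1, hgW k hk⟩]
  -- `t 0 = 0` and `t n = 1` hold only propositionally, so the endpoints are rewritten by hand.
  have key := Path.toHom_subpath_comm_of_forall_lt α hsq
  have h₀ := hαP 0 n.zero_le
  have h₁ := hαP n le_rfl
  revert key h₀ h₁
  generalize α 0 = α₀, α n = α₁
  revert α₀ α₁
  rw [ht0, htn n le_rfl]
  intro α₀ α₁ h hα₀ hα₁
  rw [toHom_subpath_zero_one, toHom_subpath_zero_one] at h
  exact ⟨α₀, α₁, hα₀, hα₁, h⟩

theorem eventually_exists_toHom_comm [LocallyPathConnectedSpace X]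
    (hslsc : ∀ x : X, ∃ U ∈ 𝓝 x, IsRelativelySimplyConnected U) (f : C(I, X)) {U V : Set X}
    (hU : U ∈ 𝓝 (f 1)) (hV : V ∈ 𝓝 (f 0)) :
    ∀ᶠ g in 𝓝 f, ∃ (α : Path (f 0) (g 0)) (β : Path (f 1) (g 1)), range α ⊆ V ∧ range β ⊆ U ∧
      f.toPath.toHom ≫ β.toHom = α.toHom ≫ g.toPath.toHom := by
  choose W hWo hxW _ hW using exists_isOpen_isPathConnected_isRelativelySimplyConnected hslsc
  obtain ⟨t, ht0, htm, ⟨n, htn⟩, hcov⟩ := exists_monotone_Icc_subset_open_cover_unitInterval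
    (fun x => (hWo x).preimage f.continuous) fun s _ => mem_iUnion.2 ⟨f s, hxW (f s)⟩
  choose w hw using hcov
  -- `A k` is a neighbourhood of `f (t k)` lying in the sets of both pieces that meet at `t k`,
  -- and in `V`, resp. `U`, at the two ends.
  let A (k : ℕ) : Set X := (if k = 0 then V else W (w (k - 1))) ∩ (if k < n then W (w k) else U)
  have hA : ∀ k, A k ∈ 𝓝 (f (t k)) := by
    refine fun k => inter_mem ?_ ?_ <;> split_ifs with hk
    · simpa [hk, ht0] using hV
    · refine (hWo _).mem_nhds (hw (k - 1) ?_)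
      rw [Nat.sub_add_cancel (Nat.pos_of_ne_zero hk)]
      exact ⟨htm (Nat.sub_le k 1), le_rfl⟩
    · exact (hWo _).mem_nhds (hw k ⟨le_rfl, htm k.le_succ⟩)
    · simpa [htn k (not_lt.1 hk)] using hU
  choose P hP hPA using fun k => (path_connected_basis (f (t k))).mem_iff.1 (hA k)
  have hmaps : ∀ᶠ g : C(I, X) in 𝓝 f, ∀ k ∈ Iio n, MapsTo g (Icc (t k) (t (k + 1))) (W (w k)) :=
    (eventually_all_finite (finite_Iio n)).2 fun k _ =>
      (isOpen_setOfPred_mapsTo isCompact_Icc (hWo _)).mem_nhds (hw k)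
  have hends : ∀ᶠ g : C(I, X) in 𝓝 f, ∀ k ∈ Iic n, g (t k) ∈ P k :=
    (eventually_all_finite (finite_Iic n)).2 fun k _ =>
      (continuous_eval_const (t k)).continuousAt.preimage_mem_nhds (hP k).1
  filter_upwards [hmaps, hends] with g hgW hgP
  obtain ⟨α, β, hα, hβ, h⟩ := exists_toHom_comm_of_subdivision ht0 htm htn (fun k _ => hW (w k))
    (fun k _ => hw k) hgW (fun k _ => (hP k).2) (fun k _ => mem_of_mem_nhds (hP k).1) hgP
    fun k hk => ⟨(hPA k).trans fun _ hx => by simpa [A, hk] using hx.2,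
      (hPA (k + 1)).trans fun _ hx => by simpa [A] using hx.1⟩
  exact ⟨α, β, hα.trans ((hPA 0).trans fun _ hx => by simpa [A] using hx.1),
    hβ.trans ((hPA n).trans fun _ hx => by simpa [A] using hx.2), h⟩

end ContinuousMap

namespace PiOne

variable {X : Type*} [TopologicalSpace X] {u v : X}

def sheet (ζ : Path.Homotopic.Quotient u v) (U V : Set X) : Set (PiOne X) :=
  {c | ∃ (b a : X) (α : Path u b) (β : Path v a), range α ⊆ V ∧ range β ⊆ U ∧
    ofHom (inv α.toHom ≫ ζ ≫ β.toHom) = c}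

lemma injOn_kin_sheet (ζ : Path.Homotopic.Quotient u v) {U V : Set X}
    (hU : IsRelativelySimplyConnected U) (hV : IsRelativelySimplyConnected V) :
    InjOn kin (sheet ζ U V) := by
  rintro _ ⟨b, a, α, β, hα, hβ, rfl⟩ _ ⟨b', a', α', β', hα', hβ', rfl⟩ h
  obtain ⟨rfl, rfl⟩ : a = a' ∧ b = b' := by simpa using h
  simp only [hV.toHom_eq hα hα', hU.toHom_eq hβ hβ']

lemma exists_mem_sheet {U V : Set X} (hU : IsPathConnected U) (hV : IsPathConnected V)
    (hu : u ∈ V) (hv : v ∈ U) {a b : X} (ha : a ∈ U) (hb : b ∈ V)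
    (ξ : Path.Homotopic.Quotient b a) :
    ∃ ζ : Path.Homotopic.Quotient u v, ofHom ξ ∈ sheet ζ U V := by
  obtain ⟨α, hα⟩ := hV.joinedIn u hu b hb
  obtain ⟨β, hβ⟩ := hU.joinedIn v hv a ha
  exact ⟨α.toHom ≫ ξ ≫ inv β.toHom, b, a, α, β, range_subset_iff.2 hα, range_subset_iff.2 hβ,
    by simp⟩

lemma preimage_kin_subset_iUnion_sheet {U V : Set X} (hU : IsPathConnected U)
    (hV : IsPathConnected V) (hu : u ∈ V) (hv : v ∈ U) :
    kin ⁻¹' (U ×ˢ V) ⊆ ⋃ ζ : Path.Homotopic.Quotient u v, sheet ζ U V := by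
  rintro c ⟨ha, hb⟩
  obtain ⟨f, rfl⟩ := Quotient.exists_rep c
  exact mem_iUnion.2 (exists_mem_sheet hU hV hu hv ha hb f.toPath.toHom)

lemma surjOn_kin_sheet (ζ : Path.Homotopic.Quotient u v) {U V : Set X} (hU : IsPathConnected U)
    (hV : IsPathConnected V) (hu : u ∈ V) (hv : v ∈ U) : SurjOn kin (sheet ζ U V) (U ×ˢ V) := by
  rintro ⟨a, b⟩ ⟨ha, hb⟩
  obtain ⟨α, hα⟩ := hV.joinedIn u hu b hb
  obtain ⟨β, hβ⟩ := hU.joinedIn v hv a ha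
  exact ⟨_, ⟨b, a, α, β, range_subset_iff.2 hα, range_subset_iff.2 hβ, rfl⟩, kin_ofHom _⟩

theorem isOpen_sheet [LocallyPathConnectedSpace X]
    (hslsc : ∀ x : X, ∃ U ∈ 𝓝 x, IsRelativelySimplyConnected U) (ζ : Path.Homotopic.Quotient u v)
    {U V : Set X} (hU : IsOpen U) (hV : IsOpen V) : IsOpen (sheet ζ U V) := by
  refine isOpen_iff_isOpen_preimage_mk.2 <|
    isOpen_iff_mem_nhds.2 fun f ⟨b, a, α, β, hα, hβ, hf⟩ => ?_
  obtain ⟨rfl, rfl⟩ : a = f 1 ∧ b = f 0 := by simpa [kin_mk] using congrArg kin hf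
  rw [mk_eq_ofHom] at hf
  have hζ := ofHom_injective hf
  filter_upwards [f.eventually_exists_toHom_comm hslsc (hU.mem_nhds (hβ ⟨1, β.target⟩))
    (hV.mem_nhds (hα ⟨1, α.target⟩))] with g ⟨α', β', hα', hβ', h⟩
  refine ⟨g 0, g 1, α.trans α', β.trans β', ?_, ?_, ?_⟩
  · simpa [Path.trans_range] using ⟨hα, hα'⟩
  · simpa [Path.trans_range] using ⟨hβ, hβ'⟩
  · rw [mk_eq_ofHom, (IsIso.eq_inv_comp _).2 h.symm, ← hζ]
    simp

theorem isOpenMap_domRestrict_kin_sheet [LocallyPathConnectedSpace X]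
    (ζ : Path.Homotopic.Quotient u v) {U V : Set X} (hU : IsOpen U) (hV : IsOpen V) :
    IsOpenMap ((sheet ζ U V).domRestrict kin) := by
  rintro _ ⟨O, hO, rfl⟩
  refine isOpen_iff_mem_nhds.2 ?_
  rintro _ ⟨⟨_, b, a, α, β, hα, hβ, rfl⟩, hO', rfl⟩
  obtain ⟨η, rfl⟩ := Path.toHom_surjective ζ
  obtain ⟨Ω₀, hΩ₀, Ω₁, hΩ₁, hΩ⟩ := exists_mem_nhds_ofHom_mem (α.symm.trans (η.trans β)) hO
    (by simpa using hO')
  obtain ⟨P₀, ⟨hP₀, hP₀c⟩, hP₀Ω⟩ := (path_connected_basis b).mem_iff.1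
    (inter_mem hΩ₀ (hV.mem_nhds (hα ⟨1, α.target⟩)))
  obtain ⟨P₁, ⟨hP₁, hP₁c⟩, hP₁Ω⟩ := (path_connected_basis a).mem_iff.1
    (inter_mem hΩ₁ (hU.mem_nhds (hβ ⟨1, β.target⟩)))
  rw [domRestrict_apply, kin_ofHom]
  refine mem_of_superset (prod_mem_nhds hP₁ hP₀) ?_
  rintro ⟨a', b'⟩ ⟨ha', hb'⟩
  obtain ⟨c₀, hc₀⟩ := hP₀c.joinedIn b (mem_of_mem_nhds hP₀) b' hb'
  obtain ⟨c₁, hc₁⟩ := hP₁c.joinedIn a (mem_of_mem_nhds hP₁) a' ha'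
  have hr₀ : range c₀ ⊆ Ω₀ ∩ V := (range_subset_iff.2 hc₀).trans hP₀Ω
  have hr₁ : range c₁ ⊆ Ω₁ ∩ U := (range_subset_iff.2 hc₁).trans hP₁Ω
  refine ⟨⟨_, b', a', α.trans c₀, β.trans c₁, ?_, ?_, rfl⟩, ?_, by simp⟩
  · simpa [Path.trans_range] using ⟨hα, fun _ hx => (hr₀ hx).2⟩
  · simpa [Path.trans_range] using ⟨hβ, fun _ hx => (hr₁ hx).2⟩
  · simpa using hΩ c₀ c₁ (fun _ hx => (hr₀ hx).1) fun _ hx => (hr₁ hx).1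

theorem isCompact_sheet_inter_preimage_kin [LocallyPathConnectedSpace X]
    (ζ : Path.Homotopic.Quotient u v) {U V : Set X} (hU : IsOpen U) (hV : IsOpen V)
    (hUc : IsPathConnected U) (hVc : IsPathConnected V) (hUr : IsRelativelySimplyConnected U)
    (hVr : IsRelativelySimplyConnected V) (hu : u ∈ V) (hv : v ∈ U) {D : Set (X × X)}
    (hD : IsCompact D) (hDUV : D ⊆ U ×ˢ V) : IsCompact (sheet ζ U V ∩ kin ⁻¹' D) := by
  have he : IsOpenEmbedding ((sheet ζ U V).domRestrict kin) :=
    .of_continuous_injective_isOpenMap (continuous_kin.comp continuous_subtype_val)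
      (injOn_kin_sheet ζ hUr hVr).injective (isOpenMap_domRestrict_kin_sheet ζ hU hV)
  have hDr : D ⊆ range ((sheet ζ U V).domRestrict kin) := by
    rw [range_domRestrict]
    exact hDUV.trans (surjOn_kin_sheet ζ hUc hVc hu hv)
  rw [← Subtype.image_preimage_coe]
  exact (he.isInducing.isCompact_preimage' hD hDr).image continuous_subtype_val

end PiOne

theorem isCompact_preimage_of_forall_exists_mem_nhds {E B : Type*} [TopologicalSpace E]
    [TopologicalSpace B] [T2Space B] [LocallyCompactSpace B] {f : E → B}
    (h : ∀ z, ∃ N ∈ 𝓝 z, ∀ D ⊆ N, IsCompact D → IsCompact (f ⁻¹' D)) {K : Set B}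
    (hK : IsCompact K) : IsCompact (f ⁻¹' K) := by
  choose N hN hND using h
  choose C hC hCN hCc using fun z => local_compact_nhds (hN z)
  obtain ⟨t, -, hKt⟩ := hK.elim_nhds_subcover C fun z _ => hC z
  rw [← inter_eq_left.2 hKt, inter_iUnion₂, preimage_iUnion₂]
  exact t.isCompact_biUnion fun z _ =>
    hND z _ (inter_subset_right.trans (hCN z)) (hK.inter (hCc z))

lemma Path.Homotopic.Quotient.finite_of_finite_loops {X : Type*} [TopologicalSpace X] {x y : X}
    [Finite (Path.Homotopic.Quotient x x)] (p : Path x y) :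
    Finite (Path.Homotopic.Quotient x y) :=
  have : Finite (FundamentalGroupoid.mk x ⟶ FundamentalGroupoid.mk x) :=
    inferInstanceAs (Finite (Path.Homotopic.Quotient x x))
  Finite.of_injective (fun ζ : FundamentalGroupoid.mk x ⟶ _ => ζ ≫ CategoryTheory.inv p.toHom)
    fun _ _ h => by simpa using h

namespace PiOne

variable {X : Type*} [TopologicalSpace X] [LocallyPathConnectedSpace X]

theorem finite_of_isCompact_preimage_kin
    (hslsc : ∀ x : X, ∃ U ∈ 𝓝 x, IsRelativelySimplyConnected U) {x y : X}
    (h : IsCompact (kin ⁻¹' {(y, x)})) : Finite (Path.Homotopic.Quotient x y) := by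
  obtain ⟨U, hU, hyU, hUc, hUr⟩ :=
    exists_isOpen_isPathConnected_isRelativelySimplyConnected hslsc y
  obtain ⟨V, hV, hxV, hVc, hVr⟩ :=
    exists_isOpen_isPathConnected_isRelativelySimplyConnected hslsc x
  have hdisc : IsDiscrete (kin ⁻¹' {(y, x)}) := by
    refine isDiscrete_iff_forall_mem_exists_isOpen.2 fun c hc => ?_
    have hcUV : kin c ∈ U ×ˢ V := by rw [mem_singleton_iff.1 hc]; exact ⟨hyU, hxV⟩
    obtain ⟨ζ, hζ⟩ := mem_iUnion.1 (preimage_kin_subset_iUnion_sheet hUc hVc hxV hyU hcUV)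
    refine ⟨sheet ζ U V, isOpen_sheet hslsc ζ hU hV, subset_antisymm ?_ (by simpa using ⟨hζ, hc⟩)⟩
    rintro e ⟨he, he'⟩
    exact injOn_kin_sheet ζ hUr hVr he hζ (he'.trans hc.symm)
  have hfin := h.finite hdisc
  rw [← range_ofHom, ← image_univ] at hfin
  exact finite_univ_iff.1 (hfin.of_finite_image ofHom_injective.injOn)

theorem isCompact_preimage_kin [LocallyCompactSpace X] [T2Space X]
    (hslsc : ∀ x : X, ∃ U ∈ 𝓝 x, IsRelativelySimplyConnected U)
    (hfin : ∀ x y : X, Finite (Path.Homotopic.Quotient x y)) {K : Set (X × X)}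
    (hK : IsCompact K) : IsCompact (kin ⁻¹' K) := by
  refine isCompact_preimage_of_forall_exists_mem_nhds (fun z => ?_) hK
  obtain ⟨U, hU, hzU, hUc, hUr⟩ :=
    exists_isOpen_isPathConnected_isRelativelySimplyConnected hslsc z.1
  obtain ⟨V, hV, hzV, hVc, hVr⟩ :=
    exists_isOpen_isPathConnected_isRelativelySimplyConnected hslsc z.2
  refine ⟨U ×ˢ V, prod_mem_nhds (hU.mem_nhds hzU) (hV.mem_nhds hzV), fun D hDUV hD => ?_⟩
  have hcover : kin ⁻¹' D = ⋃ ζ : Path.Homotopic.Quotient z.2 z.1, sheet ζ U V ∩ kin ⁻¹' D := by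
    rw [← iUnion_inter, inter_eq_right.2
      ((preimage_mono hDUV).trans (preimage_kin_subset_iUnion_sheet hUc hVc hzV hzU))]
  have := hfin z.2 z.1
  rw [hcover]
  exact isCompact_iUnion fun ζ =>
    isCompact_sheet_inter_preimage_kin ζ hU hV hUc hVc hUr hVr hzV hzU hD hDUV

end PiOne

/-- Let `X` be path connected, locally path connected, semilocally
simply connected, locally compact and Hausdorff. The action of `Π₁(X)` on `X` itself is
proper (the map `[γ] ↦ (γ 1, γ 0)` has compact preimages of compact sets) iff the
fundamental group `π₁(X)` is finite. -/
theorem pi_one_acts_properly_on_units_iff {X : Type*} [TopologicalSpace X]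
    [PathConnectedSpace X] [LocallyPathConnectedSpace X] [LocallyCompactSpace X] [T2Space X]
    (hslsc : ∀ x : X, ∃ U ∈ nhds x, ∀ (z : X) (γ : Path z z),
      Set.range γ ⊆ U → γ.Homotopic (Path.refl z)) :
    (∀ K : Set (X × X), IsCompact K → IsCompact (PiOne.kin ⁻¹' K)) ↔
      ∀ x : X, Finite (Path.Homotopic.Quotient x x) := by
  refine ⟨fun h x => PiOne.finite_of_isCompact_preimage_kin hslsc (h _ isCompact_singleton),
    fun h K hK => PiOne.isCompact_preimage_kin hslsc (fun x y => ?_) hK⟩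
  exact Path.Homotopic.Quotient.finite_of_finite_loops (PathConnectedSpace.somePath x y)
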